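/- Let X and Y be forests over an alphabet 𝒳 and let M be a tree mapping between X and Y. Then there exists an edit script δ̄_M using only replacements, deletions, and insertions such that δ̄_M(X) = Y, and such that: for each (i,j) ∈ M the script contains the replacement rep_{i, y_j}; for each index i of X not appearing in M the script contains the deletion del_i; for each index j of Y not appearing in M the script contains an insertion of the label y_j; and the script contains no other edits. -/

import Mathlib

/-!
First replace the label of every mapped node `i` of `X` by the label of its partner. This does not
change the shape of `X`, so `M` is still a tree mapping, and now it preserves labels. Next delete
the unmapped nodes of `X` in decreasing pre-order: deleting the last unmapped node `i` only shifts
the (mapped) nodes after `i` down by one, so every deletion keeps its original index and the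
shifted `M` is again a label-preserving tree mapping. Once all of `X` is mapped, delete the last
unmapped node `j` of `Y` from `Y`, recurse, and undo that deletion by one insertion. In the end `M`
maps `{1, …, |X|}` onto `{1, …, |Y|}` monotonically, so it is the identity, and a forest is
determined by the labels and subtree sizes (equivalently, the ancestor relation) along its
pre-order, so the two forests coincide.
-/

namespace TED

/-- A tree over an alphabet `α`: a label together with a (possibly empty) list of children. -/
inductive PTree (α : Type) where
  | node : α → List (PTree α) → PTree α

/-- A forest over `α` is a finite list of trees; `[]` is the empty forest `ε`. -/
abbrev Forest (α : Type) := List (PTree α)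

namespace PTree

/-- The label of (the root of) a tree. -/
def label {α : Type} : PTree α → α
  | node a _ => a

/-- The children of (the root of) a tree. -/
def children {α : Type} : PTree α → List (PTree α)
  | node _ cs => cs

mutual
  /-- The number of nodes of a tree. -/
  def size {α : Type} : PTree α → ℕ
    | node _ cs => 1 + sizeL cs
  /-- The number of nodes of a forest. -/
  def sizeL {α : Type} : List (PTree α) → ℕ
    | [] => 0
    | t :: ts => size t + sizeL ts
end

mutual
  /-- The pre-order list of all subtrees of a tree. -/
  def subtreesT {α : Type} : PTree α → List (PTree α)
    | node a cs => node a cs :: subtreesL cs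
  /-- The pre-order list of all subtrees of a forest. -/
  def subtreesL {α : Type} : List (PTree α) → List (PTree α)
    | [] => []
    | t :: ts => subtreesT t ++ subtreesL ts
end

end PTree

open PTree

/-- The pre-order `π(X)` of a forest: the list of all its subtrees. -/
def preorder {α : Type} (F : Forest α) : List (PTree α) := PTree.subtreesL F

/-- The size `|X|` of a forest: the length of its pre-order. -/
def fsize {α : Type} (F : Forest α) : ℕ := (preorder F).length

/-- The `i`-th subtree `x̄_i` (1-indexed pre-order) of a forest, if it exists. -/
def treeAt {α : Type} (F : Forest α) (i : ℕ) : Option (PTree α) := (preorder F)[i - 1]?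

/-- The label `x_i` of the `i`-th subtree, as an element of `𝒳 ∪ {−}`
(`none` plays the role of the gap symbol `−`). -/
def labelAt {α : Type} (F : Forest α) (i : ℕ) : Option α := (treeAt F i).map PTree.label

/-- The number of nodes of the `i`-th subtree `x̄_i`. -/
def sizeAt {α : Type} (F : Forest α) (i : ℕ) : ℕ := ((treeAt F i).map PTree.size).getD 0

/-- A cost function over `α`: a real-valued function on `(𝒳 ∪ {−}) × (𝒳 ∪ {−})`,
where the gap symbol `−` is modelled by `none`. -/
abbrev Cost (α : Type) := Option α → Option α → ℝ

/-- `c` is non-negative. -/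
def Nonneg {α : Type} (c : Cost α) : Prop := ∀ x y, 0 ≤ c x y
/-- `c` is self-equal. -/
def SelfEq {α : Type} (c : Cost α) : Prop := ∀ x, c x x = 0
/-- `c` is discernible. -/
def Discernible {α : Type} (c : Cost α) : Prop := ∀ x y, x ≠ y → 0 < c x y
/-- `c` is symmetric. -/
def Symm {α : Type} (c : Cost α) : Prop := ∀ x y, c x y = c y x
/-- `c` conforms to the triangular inequality. -/
def Triangle {α : Type} (c : Cost α) : Prop := ∀ x y z, c x z ≤ c x y + c y z

/-- Deletion of the first root: its children are spliced into its place. -/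
def delRoot {α : Type} : Forest α → Forest α
  | [] => []
  | PTree.node _ cs :: ts => cs ++ ts

/-- Replacement of the label of the first root by `y`. -/
def repRoot {α : Type} (y : α) : Forest α → Forest α
  | [] => []
  | PTree.node _ cs :: ts => PTree.node y cs :: ts

/-- Insertion of a new root labeled `y` at root level, adopting the trees
`l` to `r-1` of the forest as its children. -/
def insRoot {α : Type} (y : α) (l r : ℕ) (F : Forest α) : Forest α :=
  if r > F.length + 1 ∨ l > r ∨ l < 1 then F
  else if l = r then F.take (l - 1) ++ [PTree.node y []] ++ F.drop (l - 1)
  else F.take (l - 1) ++ [PTree.node y ((F.drop (l - 1)).take (r - l))] ++ F.drop (r - 1)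

/-- `del_i`: deletion of the node with pre-order index `i`. -/
def applyDel {α : Type} : ℕ → Forest α → Forest α
  | _, [] => []
  | i, PTree.node a cs :: ts =>
    if i < 1 then PTree.node a cs :: ts
    else if i = 1 then delRoot (PTree.node a cs :: ts)
    else if i ≤ size (PTree.node a cs) then PTree.node a (applyDel (i - 1) cs) :: ts
    else PTree.node a cs :: applyDel (i - size (PTree.node a cs)) ts
  termination_by _ F => sizeOf F

/-- `rep_{i,y}`: replacement of the label of the node with pre-order index `i` by `y`. -/
def applyRep {α : Type} (y : α) : ℕ → Forest α → Forest α
  | _, [] => []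
  | i, PTree.node a cs :: ts =>
    if i < 1 then PTree.node a cs :: ts
    else if i = 1 then repRoot y (PTree.node a cs :: ts)
    else if i ≤ size (PTree.node a cs) then PTree.node a (applyRep y (i - 1) cs) :: ts
    else PTree.node a cs :: applyRep y (i - size (PTree.node a cs)) ts
  termination_by _ F => sizeOf F

/-- `ins_{i,y,l,r}`: insertion of a node labeled `y` as a child of the node with
pre-order index `i` (at root level if `i = 0`), adopting that node's children
`l` through `r-1` as its children. -/
def applyIns {α : Type} (y : α) (l r : ℕ) : ℕ → Forest α → Forest α
  | 0, F => insRoot y l r F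
  | _ + 1, [] => []
  | i + 1, PTree.node a cs :: ts =>
    if i + 1 ≤ size (PTree.node a cs) then PTree.node a (applyIns y l r i cs) :: ts
    else PTree.node a cs :: applyIns y l r (i + 1 - size (PTree.node a cs)) ts
  termination_by _ F => sizeOf F

/-- The standard edits: deletions `del_i`, replacements `rep_{i,y}` and
insertions `ins_{i,y,l,r}`. -/
inductive Edit (α : Type) where
  | del (i : ℕ)
  | rep (i : ℕ) (y : α)
  | ins (i : ℕ) (y : α) (l r : ℕ)

/-- Application of a single edit to a forest. -/
def Edit.apply {α : Type} : Edit α → Forest α → Forest α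
  | .del i, F => applyDel i F
  | .rep i y, F => applyRep y i F
  | .ins i y l r, F => applyIns y l r i F

/-- Application of an edit script `δ̄ = δ₁,…,δ_T` to a forest (left to right). -/
def applyScript {α : Type} (δ : List (Edit α)) (F : Forest α) : Forest α :=
  δ.foldl (fun F e => e.apply F) F

/-- `x̄_k` is a (proper) ancestor of `x̄_i`, expressed via 1-indexed pre-order indices:
the descendants of `x̄_k` occupy exactly the pre-order indices `k+1, …, k + |x̄_k| - 1`. -/
def AncestorIdx {α : Type} (F : Forest α) (k i : ℕ) : Prop :=
  k < i ∧ i < k + sizeAt F k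

/-- A tree mapping between two forests: a set `M ⊆ {1,…,|F|} × {1,…,|G|}` such that
for all `(i,j), (i',j') ∈ M` we have `i = i' ↔ j = j'`, `i ≤ i' ↔ j ≤ j'`, and
`x̄_i` is an ancestor of `x̄_{i'}` iff `ȳ_j` is an ancestor of `ȳ_{j'}`. -/
def IsTreeMapping {α : Type} (F G : Forest α) (M : Finset (ℕ × ℕ)) : Prop :=
  (∀ p ∈ M, 1 ≤ p.1 ∧ p.1 ≤ fsize F ∧ 1 ≤ p.2 ∧ p.2 ≤ fsize G) ∧
  (∀ p ∈ M, ∀ q ∈ M,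
    (p.1 = q.1 ↔ p.2 = q.2) ∧
    (p.1 ≤ q.1 ↔ p.2 ≤ q.2) ∧
    (AncestorIdx F p.1 q.1 ↔ AncestorIdx G p.2 q.2))

/-- The cost `c(M, X, Y)` of a tree mapping: the sum of the replacement costs of
the mapped pairs, the deletion costs of the unmapped nodes of `X`, and the
insertion costs of the unmapped nodes of `Y`. -/
noncomputable def mapCost {α : Type} (c : Cost α) (F G : Forest α) (M : Finset (ℕ × ℕ)) : ℝ :=
  (∑ p ∈ M, c (labelAt F p.1) (labelAt G p.2))
  + (∑ i ∈ (Finset.Icc 1 (fsize F)).filter (fun i => ∀ p ∈ M, p.1 ≠ i), c (labelAt F i) none)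
  + (∑ j ∈ (Finset.Icc 1 (fsize G)).filter (fun j => ∀ p ∈ M, p.2 ≠ j), c none (labelAt G j))

/-- A co-optimal tree mapping: a tree mapping of minimum cost. -/
def IsCoOptimal {α : Type} (c : Cost α) (F G : Forest α) (M : Finset (ℕ × ℕ)) : Prop :=
  IsTreeMapping F G M ∧
  ∀ M' : Finset (ℕ × ℕ), IsTreeMapping F G M' → mapCost c F G M ≤ mapCost c F G M'

variable {α : Type}

section Preorder

@[simp] lemma subtreesT_node (a : α) (cs : Forest α) :
    subtreesT (node a cs) = node a cs :: subtreesL cs := by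
  rw [subtreesT]

@[simp] lemma subtreesL_nil : subtreesL ([] : Forest α) = [] := by
  rw [subtreesL]

@[simp] lemma subtreesL_cons (t : PTree α) (ts : Forest α) :
    subtreesL (t :: ts) = subtreesT t ++ subtreesL ts := by
  rw [subtreesL]

lemma preorder_cons (a : α) (cs ts : Forest α) :
    preorder (node a cs :: ts) = node a cs :: (preorder cs ++ preorder ts) := by
  simp [preorder]

lemma preorder_append : ∀ A B : Forest α, preorder (A ++ B) = preorder A ++ preorder B
  | [], _ => by simp [preorder]
  | t :: ts, B => by simpa [preorder] using preorder_append ts B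

@[simp] lemma fsize_nil : fsize ([] : Forest α) = 0 := rfl

lemma fsize_cons (a : α) (cs ts : Forest α) :
    fsize (node a cs :: ts) = 1 + fsize cs + fsize ts := by
  simp [fsize, preorder_cons]
  omega

mutual
lemma size_eq_length_subtreesT : ∀ t : PTree α, size t = (subtreesT t).length
  | node a cs => by
    rw [size, subtreesT, sizeL_eq_fsize cs]
    simp [fsize, preorder, Nat.add_comm]

lemma sizeL_eq_fsize : ∀ F : Forest α, sizeL F = fsize F
  | [] => rfl
  | t :: ts => by
    rw [sizeL, size_eq_length_subtreesT t, sizeL_eq_fsize ts]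
    simp [fsize, preorder]
end

lemma size_node (a : α) (cs : Forest α) : size (node a cs) = 1 + fsize cs := by
  rw [size, sizeL_eq_fsize]

lemma eq_nil_of_fsize_eq_zero : ∀ {F : Forest α}, fsize F = 0 → F = []
  | [], _ => rfl
  | node a cs :: ts, h => by rw [fsize_cons] at h; omega

end Preorder

section Indexing

lemma treeAt_cons (a : α) (cs ts : Forest α) {k : ℕ} (hk : 1 ≤ k) :
    treeAt (node a cs :: ts) k =
      if k = 1 then some (node a cs)
      else if k ≤ 1 + fsize cs then treeAt cs (k - 1)
      else treeAt ts (k - 1 - fsize cs) := by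
  obtain ⟨n, rfl⟩ : ∃ n, k = n + 1 := ⟨k - 1, by omega⟩
  rcases n with _ | m
  · simp [treeAt, preorder_cons]
  · have hlen : (preorder cs).length = fsize cs := rfl
    simp only [treeAt, preorder_cons, Nat.add_sub_cancel, List.getElem?_cons_succ]
    split_ifs with h1 h2
    · omega
    · rw [List.getElem?_append_left (by omega)]
    · rw [List.getElem?_append_right (by omega), hlen]
      congr 1
      omega

lemma labelAt_cons (a : α) (cs ts : Forest α) {k : ℕ} (hk : 1 ≤ k) :
    labelAt (node a cs :: ts) k =
      if k = 1 then some a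
      else if k ≤ 1 + fsize cs then labelAt cs (k - 1)
      else labelAt ts (k - 1 - fsize cs) := by
  simp only [labelAt, treeAt_cons a cs ts hk]
  split_ifs <;> rfl

lemma sizeAt_cons (a : α) (cs ts : Forest α) {k : ℕ} (hk : 1 ≤ k) :
    sizeAt (node a cs :: ts) k =
      if k = 1 then 1 + fsize cs
      else if k ≤ 1 + fsize cs then sizeAt cs (k - 1)
      else sizeAt ts (k - 1 - fsize cs) := by
  simp only [sizeAt, treeAt_cons a cs ts hk]
  split_ifs <;> simp [size_node]

lemma treeAt_eq_none {F : Forest α} {k : ℕ} (h : fsize F < k) : treeAt F k = none :=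
  List.getElem?_eq_none (by unfold fsize at h; omega)

lemma labelAt_eq_none {F : Forest α} {k : ℕ} (h : fsize F < k) : labelAt F k = none := by
  simp [labelAt, treeAt_eq_none h]

lemma sizeAt_eq_zero {F : Forest α} {k : ℕ} (h : fsize F < k) : sizeAt F k = 0 := by
  simp [sizeAt, treeAt_eq_none h]

lemma exists_labelAt_eq_some {F : Forest α} {k : ℕ} (h1 : 1 ≤ k) (h2 : k ≤ fsize F) :
    ∃ y, labelAt F k = some y := by
  have : k - 1 < (preorder F).length := by unfold fsize at h2; omega
  exact ⟨(preorder F)[k - 1].label, by simp [labelAt, treeAt, List.getElem?_eq_getElem this]⟩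

lemma sizeAt_pos_and_le : ∀ {F : Forest α} {k : ℕ}, 1 ≤ k → k ≤ fsize F →
    1 ≤ sizeAt F k ∧ k + sizeAt F k ≤ fsize F + 1
  | [], _, _, h2 => by simp at h2; omega
  | node a cs :: ts, k, h1, h2 => by
    rw [fsize_cons] at h2
    rw [sizeAt_cons a cs ts h1, fsize_cons]
    split_ifs with hk1 hk2
    · omega
    · have := sizeAt_pos_and_le (F := cs) (k := k - 1) (by omega) (by omega)
      omega
    · have := sizeAt_pos_and_le (F := ts) (k := k - 1 - fsize cs) (by omega) (by omega)
      omega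

lemma labelAt_cons_of_le_fsize (a : α) (cs ts : Forest α) {k : ℕ} (h1 : 1 ≤ k)
    (h2 : k ≤ fsize cs) : labelAt (node a cs :: ts) (k + 1) = labelAt cs k := by
  rw [labelAt_cons a cs ts (by omega), if_neg (by omega), if_pos (by omega), Nat.add_sub_cancel]

lemma sizeAt_cons_of_le_fsize (a : α) (cs ts : Forest α) {k : ℕ} (h1 : 1 ≤ k)
    (h2 : k ≤ fsize cs) : sizeAt (node a cs :: ts) (k + 1) = sizeAt cs k := by
  rw [sizeAt_cons a cs ts (by omega), if_neg (by omega), if_pos (by omega), Nat.add_sub_cancel]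

lemma labelAt_cons_add_fsize (a : α) (cs ts : Forest α) {k : ℕ} (h1 : 1 ≤ k) :
    labelAt (node a cs :: ts) (k + 1 + fsize cs) = labelAt ts k := by
  rw [labelAt_cons a cs ts (by omega), if_neg (by omega), if_neg (by omega)]
  congr 1
  omega

lemma sizeAt_cons_add_fsize (a : α) (cs ts : Forest α) {k : ℕ} (h1 : 1 ≤ k) :
    sizeAt (node a cs :: ts) (k + 1 + fsize cs) = sizeAt ts k := by
  rw [sizeAt_cons a cs ts (by omega), if_neg (by omega), if_neg (by omega)]
  congr 1
  omega

theorem forest_ext : ∀ {F G : Forest α}, fsize F = fsize G →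
    (∀ k, 1 ≤ k → labelAt F k = labelAt G k) →
    (∀ k, 1 ≤ k → sizeAt F k = sizeAt G k) → F = G
  | [], G, h, _, _ => (eq_nil_of_fsize_eq_zero h.symm).symm
  | node a cs :: ts, [], h, _, _ => by rw [fsize_cons] at h; simp at h
  | node a cs :: ts, node b ds :: us, h, hlab, hsz => by
    have hab : a = b := by simpa [labelAt_cons] using hlab 1 le_rfl
    have hcd : fsize cs = fsize ds := by simpa [sizeAt_cons] using hsz 1 le_rfl
    rw [fsize_cons, fsize_cons] at h
    have hcs : cs = ds := by
      refine forest_ext hcd (fun k hk => ?_) (fun k hk => ?_) <;>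
        rcases le_or_gt k (fsize cs) with hkc | hkc
      · rw [← labelAt_cons_of_le_fsize a cs ts hk hkc, hlab _ (by omega),
          labelAt_cons_of_le_fsize b ds us hk (by omega)]
      · rw [labelAt_eq_none hkc, labelAt_eq_none (by omega)]
      · rw [← sizeAt_cons_of_le_fsize a cs ts hk hkc, hsz _ (by omega),
          sizeAt_cons_of_le_fsize b ds us hk (by omega)]
      · rw [sizeAt_eq_zero hkc, sizeAt_eq_zero (by omega)]
    have hts : ts = us := by
      refine forest_ext (by omega) (fun k hk => ?_) (fun k hk => ?_)
      · rw [← labelAt_cons_add_fsize a cs ts hk, hlab _ (by omega), hcd,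
          labelAt_cons_add_fsize b ds us hk]
      · rw [← sizeAt_cons_add_fsize a cs ts hk, hsz _ (by omega), hcd,
          sizeAt_cons_add_fsize b ds us hk]
    rw [hab, hcs, hts]

end Indexing

section Replacement

lemma applyRep_cons (y : α) (i : ℕ) (a : α) (cs ts : Forest α) :
    applyRep y i (node a cs :: ts) =
      if i < 1 then node a cs :: ts
      else if i = 1 then node y cs :: ts
      else if i ≤ 1 + fsize cs then node a (applyRep y (i - 1) cs) :: ts
      else node a cs :: applyRep y (i - (1 + fsize cs)) ts := by
  rw [applyRep]
  simp [repRoot, size_node]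

lemma fsize_applyRep (y : α) : ∀ (i : ℕ) (F : Forest α), fsize (applyRep y i F) = fsize F
  | _, [] => by rw [applyRep]
  | i, node a cs :: ts => by
    rw [applyRep_cons]
    split_ifs
    · rfl
    · simp only [fsize_cons]
    · simp only [fsize_cons, fsize_applyRep y (i - 1) cs]
    · simp only [fsize_cons, fsize_applyRep y _ ts]
  termination_by _ F => sizeOf F
  decreasing_by all_goals (try simp) <;> omega

lemma sizeAt_applyRep_of_pos (y : α) :
    ∀ (i : ℕ) (F : Forest α) (k : ℕ), 1 ≤ k → sizeAt (applyRep y i F) k = sizeAt F k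
  | _, [], _, _ => by rw [applyRep]
  | i, node a cs :: ts, k, hk => by
    rw [applyRep_cons]
    split_ifs <;>
      simp only [sizeAt_cons _ _ _ hk, fsize_applyRep] <;>
      split_ifs <;> first | rfl | exact sizeAt_applyRep_of_pos y _ _ _ (by omega)
  termination_by _ F => sizeOf F
  decreasing_by all_goals (try simp) <;> omega

lemma sizeAt_applyRep (y : α) (i : ℕ) (F : Forest α) : sizeAt (applyRep y i F) = sizeAt F := by
  funext k
  rcases k with _ | k
  · exact sizeAt_applyRep_of_pos y i F 1 le_rfl
  · exact sizeAt_applyRep_of_pos y i F _ (by omega)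

lemma labelAt_applyRep (y : α) : ∀ (i : ℕ) (F : Forest α) (k : ℕ), 1 ≤ k →
    labelAt (applyRep y i F) k = if k = i ∧ i ≤ fsize F then some y else labelAt F k
  | _, [], k, _ => by rw [applyRep]; simp; omega
  | i, node a cs :: ts, k, hk => by
    rw [applyRep_cons, fsize_cons]
    split_ifs <;>
      simp only [labelAt_cons _ _ _ hk, fsize_applyRep] <;>
      split_ifs <;>
      first
        | rfl
        | omega
        | (rw [labelAt_applyRep y _ _ _ (by omega)]; split_ifs <;> first | rfl | omega)
  termination_by _ F => sizeOf F
  decreasing_by all_goals (try simp) <;> omega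

lemma applyScript_cons (e : Edit α) (δ : List (Edit α)) (F : Forest α) :
    applyScript (e :: δ) F = applyScript δ (e.apply F) := rfl

lemma applyScript_append (δ δ' : List (Edit α)) (F : Forest α) :
    applyScript (δ ++ δ') F = applyScript δ' (applyScript δ F) := by
  simp [applyScript, List.foldl_append]

def repScript (L : List (ℕ × α)) : List (Edit α) := L.map fun q => Edit.rep q.1 q.2

lemma fsize_sizeAt_applyScript_repScript : ∀ (L : List (ℕ × α)) (F : Forest α),
    fsize (applyScript (repScript L) F) = fsize F ∧
      sizeAt (applyScript (repScript L) F) = sizeAt F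
  | [], _ => ⟨rfl, rfl⟩
  | q :: L, F => by
    obtain ⟨hf, hs⟩ := fsize_sizeAt_applyScript_repScript L (applyRep q.2 q.1 F)
    exact ⟨hf.trans (fsize_applyRep _ _ _), hs.trans (sizeAt_applyRep _ _ _)⟩

lemma labelAt_applyScript_repScript_of_notMem :
    ∀ (L : List (ℕ × α)) (F : Forest α) (k : ℕ),
    1 ≤ k → k ∉ L.map Prod.fst → labelAt (applyScript (repScript L) F) k = labelAt F k
  | [], _, _, _, _ => rfl
  | q :: L, F, k, hk, hkL => by
    simp only [List.map_cons, List.mem_cons, not_or] at hkL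
    rw [repScript, List.map_cons, applyScript_cons, ← repScript,
      labelAt_applyScript_repScript_of_notMem L _ k hk hkL.2]
    simp [Edit.apply, labelAt_applyRep _ _ _ _ hk, hkL.1]

lemma labelAt_applyScript_repScript : ∀ (L : List (ℕ × α)) (F : Forest α),
    (∀ q ∈ L, ∀ q' ∈ L, q.1 = q'.1 → q.2 = q'.2) →
    ∀ q ∈ L, 1 ≤ q.1 → q.1 ≤ fsize F →
      labelAt (applyScript (repScript L) F) q.1 = some q.2
  | [], _, _, _, hq, _, _ => by simp at hq
  | q₀ :: L, F, hL, q, hq, h1, h2 => by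
    rw [repScript, List.map_cons, applyScript_cons, ← repScript]
    by_cases hqL : q.1 ∈ L.map Prod.fst
    · obtain ⟨q', hq', hq'q⟩ := List.mem_map.mp hqL
      have h := labelAt_applyScript_repScript L (Edit.apply (.rep q₀.1 q₀.2) F)
        (fun r hr r' hr' => hL r (.tail _ hr) r' (.tail _ hr')) q' hq' (by omega)
        (by simp only [Edit.apply, fsize_applyRep]; omega)
      rw [hq'q, hL q' (.tail _ hq') q hq hq'q] at h
      exact h
    · have hq₀ : q = q₀ := by
        rcases List.mem_cons.mp hq with h | h
        · exact h
        · exact absurd (List.mem_map_of_mem h) hqL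
      subst hq₀
      rw [labelAt_applyScript_repScript_of_notMem L _ _ h1 hqL]
      simp [Edit.apply, labelAt_applyRep _ _ _ _ h1, h2]

end Replacement

section Deletion

lemma applyDel_cons (i : ℕ) (a : α) (cs ts : Forest α) :
    applyDel i (node a cs :: ts) =
      if i < 1 then node a cs :: ts
      else if i = 1 then cs ++ ts
      else if i ≤ 1 + fsize cs then node a (applyDel (i - 1) cs) :: ts
      else node a cs :: applyDel (i - (1 + fsize cs)) ts := by
  rw [applyDel]
  simp [delRoot, size_node]

def labels (F : Forest α) : List α := (preorder F).map label

lemma labelAt_eq_getElem?_labels (F : Forest α) (k : ℕ) : labelAt F k = (labels F)[k - 1]? := by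
  simp [labelAt, treeAt, labels]

lemma length_labels (F : Forest α) : (labels F).length = fsize F := by
  simp [labels, fsize]

lemma labels_cons (a : α) (cs ts : Forest α) :
    labels (node a cs :: ts) = a :: (labels cs ++ labels ts) := by
  simp [labels, preorder_cons, label]

lemma labels_append (A B : Forest α) : labels (A ++ B) = labels A ++ labels B := by
  simp [labels, preorder_append]

lemma labels_applyDel : ∀ (i : ℕ) (F : Forest α), 1 ≤ i →
    labels (applyDel i F) = (labels F).eraseIdx (i - 1)
  | _, [], _ => by simp [applyDel, labels, preorder]
  | i, node a cs :: ts, h1 => by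
    obtain ⟨i, rfl⟩ : ∃ i', i = i' + 1 := ⟨i - 1, by omega⟩
    rw [applyDel_cons, labels_cons]
    split_ifs with h0 hi hc
    · omega
    · simp [hi, labels_append]
    · rw [labels_cons, labels_applyDel _ cs (by omega), Nat.add_sub_cancel,
        ← Nat.sub_add_cancel (show 1 ≤ i by omega), List.eraseIdx_cons_succ,
        List.eraseIdx_append_of_lt_length (by rw [length_labels]; omega)]
      rfl
    · rw [labels_cons, labels_applyDel _ ts (by omega), Nat.add_sub_cancel,
        ← Nat.sub_add_cancel (show 1 ≤ i by omega), List.eraseIdx_cons_succ,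
        List.eraseIdx_append_of_length_le (by rw [length_labels]; omega), length_labels]
      congr 3
      omega
  termination_by _ F => sizeOf F
  decreasing_by all_goals (try simp) <;> omega

lemma fsize_applyDel (i : ℕ) (F : Forest α) (h1 : 1 ≤ i) (h2 : i ≤ fsize F) :
    fsize (applyDel i F) = fsize F - 1 := by
  rw [← length_labels, ← length_labels, labels_applyDel i F h1, List.length_eraseIdx,
    length_labels, if_pos (by omega)]

lemma labelAt_applyDel (i : ℕ) (F : Forest α) {k : ℕ} (hi : 1 ≤ i) (hk : 1 ≤ k) :
    labelAt (applyDel i F) k = labelAt F (if k < i then k else k + 1) := by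
  simp only [labelAt_eq_getElem?_labels, labels_applyDel i F hi, List.getElem?_eraseIdx]
  split_ifs <;> first | omega | rfl | (congr 1; omega)

lemma treeAt_append_children (a : α) (cs ts : Forest α) {k : ℕ} (hk : 1 ≤ k) :
    treeAt (cs ++ ts) k = treeAt (node a cs :: ts) (k + 1) := by
  obtain ⟨m, rfl⟩ : ∃ m, k = m + 1 := ⟨k - 1, by omega⟩
  simp [treeAt, preorder_cons, preorder_append]

lemma sizeAt_applyDel :
    ∀ (i : ℕ) (F : Forest α) (k : ℕ), 1 ≤ i → i ≤ fsize F → 1 ≤ k →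
    sizeAt (applyDel i F) k =
      if k < i then (if i < k + sizeAt F k then sizeAt F k - 1 else sizeAt F k)
      else sizeAt F (k + 1)
  | _, [], _, _, h, _ => by simp at h; omega
  | i, node a cs :: ts, k, h1, h2, hk => by
    rw [fsize_cons] at h2
    rw [applyDel_cons, if_neg (by omega)]
    rcases (show i = 1 ∨ (2 ≤ i ∧ i ≤ 1 + fsize cs) ∨ 1 + fsize cs < i by omega)
      with hi | hi | hi
    · rw [if_pos hi, if_neg (by omega)]
      simp [sizeAt, treeAt_append_children a cs ts hk]
    · have hcs := fsize_applyDel (i - 1) cs (by omega) (by omega)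
      rw [if_neg (by omega), if_pos hi.2]
      simp only [sizeAt_cons _ _ _ hk, sizeAt_cons _ _ _ (show 1 ≤ k + 1 by omega), hcs,
        Nat.add_sub_cancel]
      split_ifs <;> first | omega | (congr 1; omega) |
        (rw [sizeAt_applyDel (i - 1) cs (k - 1) (by omega) (by omega) (by omega)]
         split_ifs <;> first | omega | (congr 1; omega))
    · have hb := sizeAt_pos_and_le (F := cs) (k := k - 1)
      rw [if_neg (by omega), if_neg (by omega)]
      simp only [sizeAt_cons _ _ _ hk, sizeAt_cons _ _ _ (show 1 ≤ k + 1 by omega),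
        Nat.add_sub_cancel]
      split_ifs <;> first | omega | (congr 1; omega) |
        (rw [sizeAt_applyDel _ ts (k - 1 - fsize cs) (by omega) (by omega) (by omega)]
         split_ifs <;> first | omega | (congr 1; omega))
  termination_by _ F => sizeOf F
  decreasing_by all_goals (try simp) <;> omega

end Deletion

section Insertion

lemma applyIns_cons (y : α) (l r i : ℕ) (a : α) (cs ts : Forest α) :
    applyIns y l r (i + 1) (node a cs :: ts) =
      if i + 1 ≤ 1 + fsize cs then node a (applyIns y l r i cs) :: ts
      else node a cs :: applyIns y l r (i + 1 - (1 + fsize cs)) ts := by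
  rw [applyIns]
  simp [size_node]

lemma insRoot_cons (y : α) (t : PTree α) (W : Forest α) {l : ℕ} (r : ℕ) (hl : 1 ≤ l) :
    insRoot y (l + 1) (r + 1) (t :: W) = t :: insRoot y l r W := by
  obtain ⟨l, rfl⟩ : ∃ l', l = l' + 1 := ⟨l - 1, by omega⟩
  unfold insRoot
  rcases r with _ | r
  · simp
  · simp only [List.length_cons, Nat.add_sub_cancel, List.take_succ_cons, List.drop_succ_cons]
    split_ifs <;> first | omega | simp

lemma insRoot_append (y : α) (cs ts : Forest α) :
    insRoot y 1 (cs.length + 1) (cs ++ ts) = node y cs :: ts := by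
  unfold insRoot
  rcases cs with _ | ⟨c, cs⟩
  · simp
  · rw [if_neg (by simp), if_neg (by simp)]
    simp

theorem exists_applyIns_applyDel : ∀ (G : Forest α) (j : ℕ), 1 ≤ j → j ≤ fsize G →
    ∃ y i l r, labelAt G j = some y ∧ 1 ≤ l ∧ i ≤ fsize (applyDel j G) ∧
      applyIns y l r i (applyDel j G) = G
  | [], _, _, h => by simp at h; omega
  | node a cs :: ts, j, h1, h2 => by
    rw [fsize_cons] at h2
    rw [applyDel_cons, if_neg (by omega), labelAt_cons a cs ts h1]
    rcases (show j = 1 ∨ (2 ≤ j ∧ j ≤ 1 + fsize cs) ∨ 1 + fsize cs < j by omega)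
      with hj | hj | hj
    · simp only [if_pos hj]
      exact ⟨a, 0, 1, cs.length + 1, rfl, le_rfl, Nat.zero_le _, by
        rw [applyIns, insRoot_append]⟩
    · simp only [if_neg (show ¬j = 1 by omega), if_pos hj.2]
      obtain ⟨y, i, l, r, hy, hl, hi, hins⟩ :=
        exists_applyIns_applyDel cs (j - 1) (by omega) (by omega)
      refine ⟨y, i + 1, l, r, hy, hl, by rw [fsize_cons]; omega, ?_⟩
      rw [applyIns_cons, if_pos (by omega), hins]
    · simp only [if_neg (show ¬j = 1 by omega), if_neg (show ¬j ≤ 1 + fsize cs by omega)]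
      obtain ⟨y, i, l, r, hy, hl, hi, hins⟩ :=
        exists_applyIns_applyDel ts (j - (1 + fsize cs)) (by omega) (by omega)
      rcases i with _ | i
      · refine ⟨y, 0, l + 1, r + 1, by rw [← hy]; congr 1; omega, by omega, Nat.zero_le _,
          ?_⟩
        rw [applyIns] at hins
        rw [applyIns, insRoot_cons y _ _ r hl, hins]
      · refine ⟨y, i + 1 + fsize cs + 1, l, r, by rw [← hy]; congr 1; omega, hl,
          by rw [fsize_cons]; omega, ?_⟩
        rw [applyIns_cons, if_neg (by omega),
          show i + 1 + fsize cs + 1 - (1 + fsize cs) = i + 1 by omega, hins]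
  termination_by G => sizeOf G
  decreasing_by all_goals (try simp) <;> omega

end Insertion

section Mappings

/-- The pre-order index that node `a ≠ i` has after node `i` is deleted. -/
def delShift (i a : ℕ) : ℕ := if a < i then a else a - 1

lemma labelAt_applyDel_delShift (F : Forest α) {i a : ℕ} (hi : 1 ≤ i) (ha : 1 ≤ a)
    (hai : a ≠ i) : labelAt (applyDel i F) (delShift i a) = labelAt F a := by
  unfold delShift
  rw [labelAt_applyDel i F hi (by split_ifs <;> omega)]
  split_ifs <;> first | rfl | omega

lemma ancestorIdx_applyDel_delShift {F : Forest α} {i a b : ℕ}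
    (hi1 : 1 ≤ i) (hiF : i ≤ fsize F) (ha1 : 1 ≤ a) (haF : a ≤ fsize F) (hai : a ≠ i)
    (hbi : b ≠ i) :
    AncestorIdx (applyDel i F) (delShift i a) (delShift i b) ↔ AncestorIdx F a b := by
  have hsize := sizeAt_applyDel i F (delShift i a) hi1 hiF (by unfold delShift; split_ifs <;> omega)
  have hbounds := sizeAt_pos_and_le ha1 haF
  unfold AncestorIdx delShift at *
  rcases lt_or_gt_of_ne hai with ha | ha
  · simp only [if_pos ha] at hsize ⊢
    rw [hsize]
    split_ifs <;> omega
  · simp only [if_neg (show ¬a < i by omega), if_neg (show ¬a - 1 < i by omega),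
      Nat.sub_add_cancel (show 1 ≤ a by omega)] at hsize ⊢
    rw [hsize]
    split_ifs <;> omega

lemma isTreeMapping_congr_left {F F' G : Forest α} {M : Finset (ℕ × ℕ)}
    (hsize : fsize F' = fsize F) (hsizeAt : sizeAt F' = sizeAt F) :
    IsTreeMapping F' G M ↔ IsTreeMapping F G M := by
  simp only [IsTreeMapping, AncestorIdx, hsize, hsizeAt]

theorem IsTreeMapping.swap {F G : Forest α} {M : Finset (ℕ × ℕ)} (hM : IsTreeMapping F G M) :
    IsTreeMapping G F (M.image Prod.swap) := by
  obtain ⟨hbound, hrel⟩ := hM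
  refine ⟨?_, ?_⟩
  · simp only [Finset.mem_image]
    rintro _ ⟨p, hp, rfl⟩
    have := hbound p hp
    exact ⟨this.2.2.1, this.2.2.2, this.1, this.2.1⟩
  · simp only [Finset.mem_image]
    rintro _ ⟨p, hp, rfl⟩ _ ⟨q, hq, rfl⟩
    obtain ⟨h1, h2, h3⟩ := hrel p hp q hq
    exact ⟨h1.symm, h2.symm, h3.symm⟩

theorem IsTreeMapping.applyDel_left {F G : Forest α} {M : Finset (ℕ × ℕ)} {i : ℕ}
    (hM : IsTreeMapping F G M) (hi1 : 1 ≤ i) (hiF : i ≤ fsize F) (hi : i ∉ M.image Prod.fst) :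
    IsTreeMapping (applyDel i F) G (M.image (Prod.map (delShift i) id)) := by
  obtain ⟨hbound, hrel⟩ := hM
  have hne : ∀ p ∈ M, p.1 ≠ i := fun p hp h => hi (Finset.mem_image.mpr ⟨p, hp, h⟩)
  refine ⟨?_, ?_⟩
  · simp only [Finset.mem_image]
    rintro _ ⟨p, hp, rfl⟩
    have := hbound p hp
    have := hne p hp
    simp only [Prod.map_fst, Prod.map_snd, id, fsize_applyDel i F hi1 hiF, delShift]
    split_ifs <;> omega
  · simp only [Finset.mem_image]
    rintro _ ⟨p, hp, rfl⟩ _ ⟨q, hq, rfl⟩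
    obtain ⟨h1, h2, h3⟩ := hrel p hp q hq
    have hp1 := (hbound p hp).1
    have hq1 := (hbound q hq).1
    have hpi := hne p hp
    have hqi := hne q hq
    refine ⟨?_, ?_, ?_⟩
    · simp only [Prod.map_fst, Prod.map_snd, id, ← h1, delShift]
      split_ifs <;> omega
    · simp only [Prod.map_fst, Prod.map_snd, id, ← h2, delShift]
      split_ifs <;> omega
    · exact (ancestorIdx_applyDel_delShift hi1 hiF hp1 (hbound p hp).2.1 hpi hqi).trans h3

theorem IsTreeMapping.applyDel_right {F G : Forest α} {M : Finset (ℕ × ℕ)} {j : ℕ}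
    (hM : IsTreeMapping F G M) (hj1 : 1 ≤ j) (hjG : j ≤ fsize G) (hj : j ∉ M.image Prod.snd) :
    IsTreeMapping F (applyDel j G) (M.image (Prod.map id (delShift j))) := by
  have hj' : j ∉ (M.image Prod.swap).image Prod.fst := by
    rwa [Finset.image_image]
  have := (hM.swap.applyDel_left hj1 hjG hj').swap
  rwa [Finset.image_image, Finset.image_image] at this

lemma card_filter_le_eq {M : Finset (ℕ × ℕ)} {f : ℕ × ℕ → ℕ} {n k : ℕ}
    (hf : Set.InjOn f M) (hM : M.image f = Finset.Icc 1 n) (hk : k ≤ n) :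
    (M.filter fun p => f p ≤ k).card = k := by
  have himage : (M.filter fun p => f p ≤ k).image f = Finset.Icc 1 k := by
    ext m
    have hm := congrArg (m ∈ ·) hM
    simp only [Finset.mem_image, Finset.mem_Icc, Finset.mem_filter, eq_iff_iff] at hm ⊢
    constructor
    · rintro ⟨p, ⟨hp, hpk⟩, rfl⟩
      exact ⟨(hm.mp ⟨p, hp, rfl⟩).1, hpk⟩
    · rintro ⟨hm1, hmk⟩
      obtain ⟨p, hp, rfl⟩ := hm.mpr ⟨hm1, hmk.trans hk⟩
      exact ⟨p, ⟨hp, hmk⟩, rfl⟩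
  have := Finset.card_image_of_injOn (hf.mono (Finset.coe_subset.mpr (Finset.filter_subset
    (fun p => f p ≤ k) M)))
  rw [himage, Nat.card_Icc] at this
  omega

/-- `M` is the graph of an order isomorphism `{1, …, m} ≃o {1, …, n}`, hence of the
identity. -/
lemma fst_eq_snd_of_image_eq_Icc {M : Finset (ℕ × ℕ)} {m n : ℕ}
    (hle : ∀ p ∈ M, ∀ q ∈ M, p.1 ≤ q.1 ↔ p.2 ≤ q.2)
    (h1 : M.image Prod.fst = Finset.Icc 1 m) (h2 : M.image Prod.snd = Finset.Icc 1 n) :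
    m = n ∧ ∀ p ∈ M, p.1 = p.2 := by
  have hinj1 : Set.InjOn Prod.fst M := fun p hp q hq h =>
    Prod.ext h (le_antisymm ((hle p hp q hq).mp h.le) ((hle q hq p hp).mp h.ge))
  have hinj2 : Set.InjOn Prod.snd M := fun p hp q hq h =>
    Prod.ext (le_antisymm ((hle p hp q hq).mpr h.le) ((hle q hq p hp).mpr h.ge)) h
  refine ⟨?_, fun p hp => ?_⟩
  · have c1 := Finset.card_image_of_injOn hinj1
    have c2 := Finset.card_image_of_injOn hinj2
    rw [h1, Nat.card_Icc] at c1
    rw [h2, Nat.card_Icc] at c2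
    omega
  · have hp1 : p.1 ∈ M.image Prod.fst := Finset.mem_image_of_mem _ hp
    have hp2 : p.2 ∈ M.image Prod.snd := Finset.mem_image_of_mem _ hp
    rw [h1, Finset.mem_Icc] at hp1
    rw [h2, Finset.mem_Icc] at hp2
    rw [← card_filter_le_eq hinj1 h1 hp1.2, ← card_filter_le_eq hinj2 h2 hp2.2]
    congr 1
    exact Finset.filter_congr fun q hq => hle q hq p hp

lemma sizeAt_eq_of_ancestorIdx_iff {F G : Forest α} {k : ℕ} (hFG : fsize F = fsize G)
    (hk1 : 1 ≤ k) (hkF : k ≤ fsize F)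
    (hanc : ∀ b, 1 ≤ b → b ≤ fsize F → (AncestorIdx F k b ↔ AncestorIdx G k b)) :
    sizeAt F k = sizeAt G k := by
  have hF := sizeAt_pos_and_le hk1 hkF
  have hG := sizeAt_pos_and_le hk1 (hFG ▸ hkF)
  unfold AncestorIdx at hanc
  rcases lt_trichotomy (sizeAt F k) (sizeAt G k) with h | h | h
  · have := hanc (k + sizeAt F k) (by omega) (by omega)
    omega
  · exact h
  · have := hanc (k + sizeAt G k) (by omega) (by omega)
    omega

theorem IsTreeMapping.eq_of_image_eq_Icc {F G : Forest α} {M : Finset (ℕ × ℕ)}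
    (hM : IsTreeMapping F G M) (hlab : ∀ p ∈ M, labelAt F p.1 = labelAt G p.2)
    (h1 : M.image Prod.fst = Finset.Icc 1 (fsize F))
    (h2 : M.image Prod.snd = Finset.Icc 1 (fsize G)) : F = G := by
  obtain ⟨hFG, hdiag⟩ :=
    fst_eq_snd_of_image_eq_Icc (fun p hp q hq => (hM.2 p hp q hq).2.1) h1 h2
  have hid : ∀ k, 1 ≤ k → k ≤ fsize F → (k, k) ∈ M := by
    intro k hk1 hkF
    have : k ∈ M.image Prod.fst := by rw [h1, Finset.mem_Icc]; exact ⟨hk1, hkF⟩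
    obtain ⟨p, hp, rfl⟩ := Finset.mem_image.mp this
    convert hp using 1
    exact Prod.ext rfl (hdiag p hp)
  refine forest_ext hFG (fun k hk => ?_) (fun k hk => ?_) <;>
    rcases le_or_gt k (fsize F) with hkF | hkF
  · exact hlab _ (hid k hk hkF)
  · rw [labelAt_eq_none hkF, labelAt_eq_none (hFG ▸ hkF)]
  · exact sizeAt_eq_of_ancestorIdx_iff hFG hk hkF fun b hb1 hbF =>
      (hM.2 _ (hid k hk hkF) _ (hid b hb1 hbF)).2.2
  · rw [sizeAt_eq_zero hkF, sizeAt_eq_zero (hFG ▸ hkF)]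

end Mappings

section Scripts

open Finset

lemma Icc_sdiff_image_delShift {n i : ℕ} {S : Finset ℕ}
    (hi : i ∈ Icc 1 n \ S) (hmax : ∀ k ∈ Icc 1 n \ S, k ≤ i) :
    Icc 1 (n - 1) \ S.image (delShift i) = (Icc 1 n \ S).erase i := by
  simp only [mem_sdiff, mem_Icc] at hi hmax
  ext k
  simp only [mem_sdiff, mem_erase, mem_Icc, mem_image, not_exists, not_and]
  constructor
  · rintro ⟨hk, hkS⟩
    have hki : k < i := by
      by_contra hik
      have hk1S : k + 1 ∈ S := by
        by_contra h
        have := hmax (k + 1) ⟨⟨by omega, by omega⟩, h⟩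
        omega
      exact hkS (k + 1) hk1S (by unfold delShift; split_ifs <;> omega)
    refine ⟨by omega, ⟨by omega, by omega⟩, fun hk => hkS k hk ?_⟩
    unfold delShift
    rw [if_pos hki]
  · rintro ⟨hki, ⟨hk1, hkn⟩, hkS⟩
    have hki : k < i := lt_of_le_of_ne (hmax k ⟨⟨hk1, hkn⟩, hkS⟩) hki
    refine ⟨⟨hk1, by omega⟩, fun a ha hak => ?_⟩
    have hai : a ≠ i := fun h => hi.2 (h ▸ ha)
    unfold delShift at hak
    split_ifs at hak
    · exact hkS (hak ▸ ha)
    · omega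

lemma mem_Icc_sdiff_image_iff {M : Finset (ℕ × ℕ)} {f : ℕ × ℕ → ℕ} {n k : ℕ} :
    k ∈ Icc 1 n \ M.image f ↔ 1 ≤ k ∧ k ≤ n ∧ ∀ p ∈ M, f p ≠ k := by
  simp [and_assoc]

def IsInsertionOf (G : Forest α) (j : ℕ) (e : Edit α) : Prop :=
  ∃ y i l r, labelAt G j = some y ∧ e = Edit.ins i y l r

def IsDelInsScript (U V : Finset ℕ) (G : Forest α) (δ : List (Edit α)) : Prop :=
  (∀ i ∈ U, Edit.del i ∈ δ) ∧ (∀ j ∈ V, ∃ e ∈ δ, IsInsertionOf G j e) ∧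
    ∀ e ∈ δ, (∃ i ∈ U, e = Edit.del i) ∨ ∃ j ∈ V, IsInsertionOf G j e

lemma isDelInsScript_nil (G : Forest α) : IsDelInsScript ∅ ∅ G [] := by
  simp [IsDelInsScript]

lemma IsDelInsScript.cons_del {U V : Finset ℕ} {G : Forest α} {δ : List (Edit α)} {i : ℕ}
    (hδ : IsDelInsScript (U.erase i) V G δ) (hi : i ∈ U) :
    IsDelInsScript U V G (Edit.del i :: δ) := by
  obtain ⟨hdel, hins, hsound⟩ := hδ
  refine ⟨fun k hk => ?_, fun j hj => ?_, fun e he => ?_⟩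
  · by_cases hki : k = i
    · exact hki ▸ List.mem_cons_self
    · exact List.mem_cons_of_mem _ (hdel k (mem_erase.mpr ⟨hki, hk⟩))
  · obtain ⟨e, he, hje⟩ := hins j hj
    exact ⟨e, List.mem_cons_of_mem _ he, hje⟩
  · rcases List.mem_cons.mp he with rfl | he
    · exact Or.inl ⟨i, hi, rfl⟩
    · rcases hsound e he with ⟨k, hk, rfl⟩ | hj
      · exact Or.inl ⟨k, mem_of_mem_erase hk, rfl⟩
      · exact Or.inr hj

lemma IsDelInsScript.append_ins {V : Finset ℕ} {G G' : Forest α} {δ : List (Edit α)} {j : ℕ}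
    {e : Edit α} (hδ : IsDelInsScript ∅ (V.erase j) G' δ)
    (hG' : ∀ k ∈ V.erase j, labelAt G' k = labelAt G k) (hj : j ∈ V)
    (he : IsInsertionOf G j e) :
    IsDelInsScript ∅ V G (δ ++ [e]) := by
  obtain ⟨-, hins, hsound⟩ := hδ
  have hins' : ∀ k ∈ V.erase j, ∀ e, IsInsertionOf G' k e → IsInsertionOf G k e := by
    rintro k hk _ ⟨y, i, l, r, hy, rfl⟩
    exact ⟨y, i, l, r, (hG' k hk) ▸ hy, rfl⟩
  refine ⟨by simp, fun k hk => ?_, fun e' he' => ?_⟩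
  · by_cases hkj : k = j
    · exact ⟨e, by simp, hkj ▸ he⟩
    · obtain ⟨e', he', hke'⟩ := hins k (mem_erase.mpr ⟨hkj, hk⟩)
      exact ⟨e', List.mem_append_left _ he', hins' k (mem_erase.mpr ⟨hkj, hk⟩) e' hke'⟩
  · rcases List.mem_append.mp he' with he' | he'
    · rcases hsound e' he' with ⟨k, hk, -⟩ | ⟨k, hk, hke'⟩
      · simp at hk
      · exact Or.inr ⟨k, mem_of_mem_erase hk, hins' k hk e' hke'⟩
    · exact Or.inr ⟨j, hj, (List.mem_singleton.mp he') ▸ he⟩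

lemma IsTreeMapping.image_snd_subset {F G : Forest α} {M : Finset (ℕ × ℕ)}
    (hM : IsTreeMapping F G M) : M.image Prod.snd ⊆ Icc 1 (fsize G) := by
  intro j hj
  obtain ⟨p, hp, rfl⟩ := mem_image.mp hj
  exact mem_Icc.mpr ⟨(hM.1 p hp).2.2.1, (hM.1 p hp).2.2.2⟩

lemma IsTreeMapping.image_fst_subset {F G : Forest α} {M : Finset (ℕ × ℕ)}
    (hM : IsTreeMapping F G M) : M.image Prod.fst ⊆ Icc 1 (fsize F) := by
  intro i hi
  obtain ⟨p, hp, rfl⟩ := mem_image.mp hi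
  exact mem_Icc.mpr ⟨(hM.1 p hp).1, (hM.1 p hp).2.1⟩

theorem exists_insertion_script : ∀ (n : ℕ) {F G : Forest α} {M : Finset (ℕ × ℕ)},
    IsTreeMapping F G M → (∀ p ∈ M, labelAt F p.1 = labelAt G p.2) →
    M.image Prod.fst = Icc 1 (fsize F) → (Icc 1 (fsize G) \ M.image Prod.snd).card = n →
    ∃ δ, applyScript δ F = G ∧ IsDelInsScript ∅ (Icc 1 (fsize G) \ M.image Prod.snd) G δ
  | 0, F, G, M, hM, hlab, htot, hcard => by
    have hV := card_eq_zero.mp hcard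
    have hsnd : M.image Prod.snd = Icc 1 (fsize G) :=
      subset_antisymm hM.image_snd_subset (sdiff_eq_empty_iff_subset.mp hV)
    exact ⟨[], (hM.eq_of_image_eq_Icc hlab htot hsnd).symm ▸ rfl, hV ▸ isDelInsScript_nil G⟩
  | n + 1, F, G, M, hM, hlab, htot, hcard => by
    obtain ⟨j, hjV, hmax⟩ :=
      (Icc 1 (fsize G) \ M.image Prod.snd).exists_max_image id (card_pos.mp (by omega))
    obtain ⟨⟨hj1, hjG⟩, hj⟩ := by simpa only [mem_sdiff, mem_Icc] using hjV
    have hne : ∀ p ∈ M, p.2 ≠ j := fun p hp h => hj (mem_image.mpr ⟨p, hp, h⟩)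
    have hV' : Icc 1 (fsize (applyDel j G)) \ (M.image (Prod.map id (delShift j))).image Prod.snd =
        (Icc 1 (fsize G) \ M.image Prod.snd).erase j := by
      rw [fsize_applyDel j G hj1 hjG, image_image, ← Icc_sdiff_image_delShift hjV hmax,
        image_image]
      rfl
    obtain ⟨δ, happly, hδ⟩ := exists_insertion_script n (hM.applyDel_right hj1 hjG hj)
      (by
        simp only [mem_image]
        rintro _ ⟨p, hp, rfl⟩
        exact (hlab p hp).trans
          (labelAt_applyDel_delShift G hj1 (hM.1 p hp).2.2.1 (hne p hp)).symm)
      (by rw [image_image]; exact htot)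
      (by rw [hV', card_erase_of_mem hjV, hcard, Nat.add_sub_cancel])
    obtain ⟨y, i, l, r, hy, -, -, hins⟩ := exists_applyIns_applyDel G j hj1 hjG
    refine ⟨δ ++ [Edit.ins i y l r], by rw [applyScript_append, happly]; exact hins, ?_⟩
    refine (hV' ▸ hδ).append_ins (fun k hk => ?_) hjV ⟨y, i, l, r, hy, rfl⟩
    have hkj : k < j := lt_of_le_of_ne (hmax k (mem_of_mem_erase hk)) (ne_of_mem_erase hk)
    rw [labelAt_applyDel j G hj1 (mem_Icc.mp (mem_sdiff.mp (mem_of_mem_erase hk)).1).1,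
      if_pos hkj]

theorem exists_delIns_script : ∀ (n : ℕ) {F G : Forest α} {M : Finset (ℕ × ℕ)},
    IsTreeMapping F G M → (∀ p ∈ M, labelAt F p.1 = labelAt G p.2) →
    (Icc 1 (fsize F) \ M.image Prod.fst).card = n →
    ∃ δ, applyScript δ F = G ∧
      IsDelInsScript (Icc 1 (fsize F) \ M.image Prod.fst) (Icc 1 (fsize G) \ M.image Prod.snd) G δ
  | 0, F, G, M, hM, hlab, hcard => by
    have hU := card_eq_zero.mp hcard
    have hfst : M.image Prod.fst = Icc 1 (fsize F) :=
      subset_antisymm hM.image_fst_subset (sdiff_eq_empty_iff_subset.mp hU)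
    rw [hU]
    exact exists_insertion_script _ hM hlab hfst rfl
  | n + 1, F, G, M, hM, hlab, hcard => by
    obtain ⟨i, hiU, hmax⟩ :=
      (Icc 1 (fsize F) \ M.image Prod.fst).exists_max_image id (card_pos.mp (by omega))
    obtain ⟨⟨hi1, hiF⟩, hi⟩ := by simpa only [mem_sdiff, mem_Icc] using hiU
    have hne : ∀ p ∈ M, p.1 ≠ i := fun p hp h => hi (mem_image.mpr ⟨p, hp, h⟩)
    have hU' : Icc 1 (fsize (applyDel i F)) \ (M.image (Prod.map (delShift i) id)).image Prod.fst =
        (Icc 1 (fsize F) \ M.image Prod.fst).erase i := by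
      rw [fsize_applyDel i F hi1 hiF, image_image, ← Icc_sdiff_image_delShift hiU hmax,
        image_image]
      rfl
    have hV' : (M.image (Prod.map (delShift i) id)).image Prod.snd = M.image Prod.snd := by
      rw [image_image]
      rfl
    obtain ⟨δ, happly, hδ⟩ := exists_delIns_script n (hM.applyDel_left hi1 hiF hi)
      (by
        simp only [mem_image]
        rintro _ ⟨p, hp, rfl⟩
        exact (labelAt_applyDel_delShift F hi1 (hM.1 p hp).1 (hne p hp)).trans (hlab p hp))
      (by rw [hU', card_erase_of_mem hiU, hcard, Nat.add_sub_cancel])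
    rw [hU', hV'] at hδ
    exact ⟨Edit.del i :: δ, happly, hδ.cons_del hiU⟩

/-- The pairs `(i, y_j)` for `(i, j) ∈ M`. -/
noncomputable def mappedLabels (G : Forest α) (M : Finset (ℕ × ℕ)) : List (ℕ × α) :=
  M.toList.filterMap fun p => (labelAt G p.2).map (p.1, ·)

lemma mem_mappedLabels {G : Forest α} {M : Finset (ℕ × ℕ)} {q : ℕ × α} :
    q ∈ mappedLabels G M ↔ ∃ p ∈ M, labelAt G p.2 = some q.2 ∧ p.1 = q.1 := by
  simp only [mappedLabels, List.mem_filterMap, Finset.mem_toList, Option.map_eq_some_iff]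
  constructor
  · rintro ⟨p, hp, y, hy, rfl⟩
    exact ⟨p, hp, hy, rfl⟩
  · rintro ⟨p, hp, hy, h1⟩
    exact ⟨p, hp, q.2, hy, by rw [h1]⟩

theorem exists_replacement_script {F G : Forest α} {M : Finset (ℕ × ℕ)}
    (hM : IsTreeMapping F G M) :
    ∃ δ : List (Edit α),
      (∀ p ∈ M, ∃ y, labelAt G p.2 = some y ∧ Edit.rep p.1 y ∈ δ) ∧
      (∀ e ∈ δ, ∃ p ∈ M, ∃ y, labelAt G p.2 = some y ∧ e = Edit.rep p.1 y) ∧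
      fsize (applyScript δ F) = fsize F ∧ IsTreeMapping (applyScript δ F) G M ∧
      ∀ p ∈ M, labelAt (applyScript δ F) p.1 = labelAt G p.2 := by
  obtain ⟨hsize, hsizeAt⟩ := fsize_sizeAt_applyScript_repScript (mappedLabels G M) F
  have hconsistent :
      ∀ q ∈ mappedLabels G M, ∀ q' ∈ mappedLabels G M, q.1 = q'.1 → q.2 = q'.2 := by
    intro q hq q' hq' h
    obtain ⟨p, hp, hy, hp1⟩ := mem_mappedLabels.mp hq
    obtain ⟨p', hp', hy', hp1'⟩ := mem_mappedLabels.mp hq'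
    have hp1p1' : p.1 = p'.1 := by rw [hp1, hp1', h]
    have hpp : p = p' := Prod.ext hp1p1' ((hM.2 p hp p' hp').1.mp hp1p1')
    rw [hpp, hy'] at hy
    exact (Option.some_injective _ hy).symm
  have hmem : ∀ p ∈ M, ∃ y, labelAt G p.2 = some y ∧ (p.1, y) ∈ mappedLabels G M := by
    intro p hp
    obtain ⟨y, hy⟩ := exists_labelAt_eq_some (hM.1 p hp).2.2.1 (hM.1 p hp).2.2.2
    exact ⟨y, hy, mem_mappedLabels.mpr ⟨p, hp, hy, rfl⟩⟩
  refine ⟨repScript (mappedLabels G M), fun p hp => ?_, fun e he => ?_, hsize,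
    (isTreeMapping_congr_left hsize hsizeAt).mpr hM, fun p hp => ?_⟩
  · obtain ⟨y, hy, hyL⟩ := hmem p hp
    exact ⟨y, hy, List.mem_map.mpr ⟨_, hyL, rfl⟩⟩
  · obtain ⟨q, hq, rfl⟩ := List.mem_map.mp he
    obtain ⟨p, hp, hy, hp1⟩ := mem_mappedLabels.mp hq
    exact ⟨p, hp, q.2, hy, by rw [hp1]⟩
  · obtain ⟨y, hy, hyL⟩ := hmem p hp
    rw [hy]
    exact labelAt_applyScript_repScript _ F hconsistent _ hyL (hM.1 p hp).1 (hM.1 p hp).2.1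

end Scripts

/-- For every tree mapping `M` between forests `X` and `Y` there is an
edit script `δ̄_M` with `δ̄_M(X) = Y` which contains the replacement `rep_{i, y_j}` for
each `(i,j) ∈ M`, the deletion `del_i` for each unmapped index `i` of `X`, an insertion
of the label `y_j` for each unmapped index `j` of `Y`, and no other edits. -/
theorem mapping_to_script {α : Type} (F G : Forest α) (M : Finset (ℕ × ℕ))
    (hM : IsTreeMapping F G M) :
    ∃ δ : List (Edit α),
      applyScript δ F = G ∧
      (∀ p ∈ M, ∃ y : α, labelAt G p.2 = some y ∧ Edit.rep p.1 y ∈ δ) ∧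
      (∀ i, 1 ≤ i → i ≤ fsize F → (∀ p ∈ M, p.1 ≠ i) → Edit.del i ∈ δ) ∧
      (∀ j, 1 ≤ j → j ≤ fsize G → (∀ p ∈ M, p.2 ≠ j) →
        ∃ (y : α) (i l r : ℕ), labelAt G j = some y ∧ Edit.ins i y l r ∈ δ) ∧
      (∀ e ∈ δ,
        (∃ p ∈ M, ∃ y : α, labelAt G p.2 = some y ∧ e = Edit.rep p.1 y) ∨
        (∃ i, 1 ≤ i ∧ i ≤ fsize F ∧ (∀ p ∈ M, p.1 ≠ i) ∧ e = Edit.del i) ∨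
        (∃ j, 1 ≤ j ∧ j ≤ fsize G ∧ (∀ p ∈ M, p.2 ≠ j) ∧
          ∃ (y : α) (i l r : ℕ), labelAt G j = some y ∧ e = Edit.ins i y l r)) := by
  obtain ⟨δ₁, hrep, hrep_only, hsize, hM₁, hlab₁⟩ :=
    exists_replacement_script (F := F) hM
  obtain ⟨δ₂, happly, hdel, hins, hδ₂_only⟩ := exists_delIns_script _ hM₁ hlab₁ rfl
  simp only [hsize, mem_Icc_sdiff_image_iff] at hdel hins hδ₂_only
  refine ⟨δ₁ ++ δ₂, by rw [applyScript_append, happly], fun p hp => ?_,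
    fun i h1 h2 hi => List.mem_append_right _ (hdel i ⟨h1, h2, hi⟩), fun j h1 h2 hj => ?_,
    fun e he => ?_⟩
  · obtain ⟨y, hy, he⟩ := hrep p hp
    exact ⟨y, hy, List.mem_append_left _ he⟩
  · obtain ⟨e, he, y, i, l, r, hy, rfl⟩ := hins j ⟨h1, h2, hj⟩
    exact ⟨y, i, l, r, hy, List.mem_append_right _ he⟩
  · rcases List.mem_append.mp he with he | he
    · exact Or.inl (hrep_only e he)
    · rcases hδ₂_only e he with ⟨i, ⟨h1, h2, hi⟩, rfl⟩ | ⟨j, ⟨h1, h2, hj⟩, hje⟩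
      · exact Or.inr (Or.inl ⟨i, h1, h2, hi, rfl⟩)
      · exact Or.inr (Or.inr ⟨j, h1, h2, hj, hje⟩)

end TED
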